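/- arXiv:0903.5467 — 3 statements merged into one kernel-verified Lean document; each statement's English description precedes it below -/
import Mathlib

section
/- Let A be a unital C*-algebra, φ a positive tracial linear functional on A, p > 2 a real number, and W ∈ A with W ≥ 0. Then for all x, y ∈ A, |φ(x W y*)| ≤ φ(|x|^p)^{1/p} · φ(|y|^p)^{1/p} · φ(W^{p/(p-2)})^{(p-2)/p} (all quantities φ(|x|^p), φ(|y|^p), φ(W^{p/(p-2)}) are nonnegative reals). In particular, if φ(W^{p/(p-2)}) ≤ 1 then |φ(x W y*)| ≤ φ(|x|^p)^{1/p} φ(|y|^p)^{1/p}. -/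
/-!
For `a, b ≥ 0` and Hölder conjugate `r, s`, put `F θ = φ (a ^ (r θ) * b ^ (s (1 - θ)))`.
Traciality turns `F θ` into `φ (X⋆ X)` with `X = a ^ (r θ / 2) * b ^ (s (1 - θ) / 2)`, and its
value at a midpoint into `φ (X⋆ Y)`; so `F ≥ 0` and, by Cauchy–Schwarz for `φ`, `F` is midpoint
log-convex. Hence `F θ ≤ F 0 ^ (1 - θ) * F 1 ^ θ` for dyadic `θ`, and by continuity at `θ = 1 / r`;
there this is the trace Hölder inequality `φ (a b) ≤ φ (a ^ r) ^ (1 / r) * φ (b ^ s) ^ (1 / s)`.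

With `W = w ^ 2`, Cauchy–Schwarz gives `|φ (x W y⋆)| ^ 2 ≤ φ (x W x⋆) φ (y W y⋆)`, and
`φ (x W x⋆) = φ (x⋆ x W)` is bounded by Hölder with `r = p / 2`, `s = p / (p - 2)`.
-/

open ComplexOrder Filter Topology Set
open scoped NNReal

theorem div_two_pow_mem_of_midpoint_mem {S : Set ℝ} (h0 : (0 : ℝ) ∈ S) (h1 : (1 : ℝ) ∈ S)
    (hmid : ∀ x ∈ S, ∀ y ∈ S, (x + y) / 2 ∈ S) (N : ℕ) :
    ∀ k : ℕ, k ≤ 2 ^ N → (k : ℝ) / 2 ^ N ∈ S := by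
  induction N with
  | zero =>
    intro k hk
    interval_cases k <;> simpa
  | succ N ih =>
    intro k hk
    obtain ⟨m, rfl | rfl⟩ := Nat.even_or_odd' k
    · convert ih m (by omega) using 1
      push_cast; ring
    · convert hmid _ (ih m (by omega)) _ (ih (m + 1) (by omega)) using 1
      push_cast; ring

theorem tendsto_floor_mul_two_pow_div {θ : ℝ} (hθ : 0 ≤ θ) :
    Tendsto (fun N : ℕ => (⌊θ * 2 ^ N⌋₊ : ℝ) / 2 ^ N) atTop (𝓝 θ) :=
  (tendsto_nat_floor_mul_div_atTop hθ).comp (tendsto_pow_atTop_atTop_of_one_lt one_lt_two)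

theorem Real.rpow_mul_rpow_midpoint {a b x y : ℝ} (ha : 0 ≤ a) (hb : 0 ≤ b)
    (hx : x ∈ Icc (0 : ℝ) 1) (hy : y ∈ Icc (0 : ℝ) 1) :
    (a ^ (1 - x) * b ^ x) * (a ^ (1 - y) * b ^ y) =
      (a ^ (1 - (x + y) / 2) * b ^ ((x + y) / 2)) ^ 2 := by
  have hsq : ∀ c : ℝ, 0 ≤ c → ∀ u v : ℝ, 0 ≤ u → 0 ≤ v →
      c ^ u * c ^ v = (c ^ ((u + v) / 2)) ^ 2 := by
    intro c hc u v hu hv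
    rw [← Real.rpow_add_of_nonneg hc hu hv, ← Real.rpow_natCast, ← Real.rpow_mul hc]
    norm_num
  obtain ⟨hx0, hx1⟩ := hx
  obtain ⟨hy0, hy1⟩ := hy
  calc _ = (a ^ (1 - x) * a ^ (1 - y)) * (b ^ x * b ^ y) := by ring
    _ = _ := by
      rw [hsq a ha _ _ (by linarith) (by linarith), hsq b hb _ _ hx0 hy0, mul_pow]
      ring_nf

theorem le_rpow_mul_rpow_of_sq_midpoint_le {F : ℝ → ℝ} (hF : ∀ x ∈ Icc (0 : ℝ) 1, 0 ≤ F x)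
    (hmid : ∀ x ∈ Icc (0 : ℝ) 1, ∀ y ∈ Icc (0 : ℝ) 1, F ((x + y) / 2) ^ 2 ≤ F x * F y)
    {θ : ℝ} (hθ : θ ∈ Ioo (0 : ℝ) 1) (hcont : ContinuousAt F θ) :
    F θ ≤ F 0 ^ (1 - θ) * F 1 ^ θ := by
  set G : ℝ → ℝ := fun x => F 0 ^ (1 - x) * F 1 ^ x
  have hF0 := hF 0 (by simp)
  have hF1 := hF 1 (by simp)
  have hG_nonneg : ∀ x, 0 ≤ G x := fun x => by positivity
  set S : Set ℝ := {x ∈ Icc 0 1 | F x ≤ G x}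
  have hS_mid : ∀ x ∈ S, ∀ y ∈ S, (x + y) / 2 ∈ S := by
    rintro x ⟨hx, hFx⟩ y ⟨hy, hFy⟩
    have hxy : (x + y) / 2 ∈ Icc (0 : ℝ) 1 := ⟨by linarith [hx.1, hy.1], by linarith [hx.2, hy.2]⟩
    refine ⟨hxy, (pow_le_pow_iff_left₀ (hF _ hxy) (hG_nonneg _) two_ne_zero).mp ?_⟩
    calc F ((x + y) / 2) ^ 2 ≤ F x * F y := hmid x hx y hy
      _ ≤ G x * G y := mul_le_mul hFx hFy (hF y hy) (hG_nonneg x)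
      _ = G ((x + y) / 2) ^ 2 := Real.rpow_mul_rpow_midpoint hF0 hF1 hx hy
  have hS_dyadic := div_two_pow_mem_of_midpoint_mem (S := S) ⟨by simp, by simp [G]⟩
    ⟨by simp, by simp [G]⟩ hS_mid
  have h_approx := tendsto_floor_mul_two_pow_div hθ.1.le
  have hG_cont : ContinuousAt G θ :=
    ((Real.continuousAt_const_rpow' (sub_ne_zero.mpr hθ.2.ne')).comp
      (continuousAt_const.sub continuousAt_id)).mul
      (Real.continuousAt_const_rpow' hθ.1.ne')
  refine le_of_tendsto_of_tendsto' (hcont.tendsto.comp h_approx) (hG_cont.tendsto.comp h_approx)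
    fun N => (hS_dyadic N _ ?_).2
  refine Nat.floor_le_of_le ?_
  push_cast
  nlinarith [hθ.2, pow_pos (two_pos : (0 : ℝ) < 2) N]

lemma map_nonneg_of_forall_star_mul_self_nonneg {R M F : Type*} [NonUnitalSemiring R]
    [PartialOrder R] [StarRing R] [StarOrderedRing R] [AddCommMonoid M] [PartialOrder M]
    [IsOrderedAddMonoid M] [FunLike F R M] [AddMonoidHomClass F R M] (φ : F)
    (hφ : ∀ a, 0 ≤ φ (star a * a)) {a : R} (ha : 0 ≤ a) : 0 ≤ φ a := by
  rw [StarOrderedRing.nonneg_iff] at ha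
  induction ha using AddSubmonoid.closure_induction with
  | mem x hx => obtain ⟨s, rfl⟩ := hx; exact hφ s
  | zero => simp
  | add x y _ _ hx hy => rw [map_add]; exact add_nonneg hx hy

section CStarAlgebra

variable {A : Type*} [CStarAlgebra A] [PartialOrder A] [StarOrderedRing A]

namespace CFC

lemma rpow_add_of_nonneg (a : A) {x y : ℝ} (hx : 0 ≤ x) (hy : 0 ≤ y) :
    a ^ (x + y) = a ^ x * a ^ y := by
  simp only [rpow_def]
  rw [← cfc_mul _ _ a (NNReal.continuous_rpow_const hx).continuousOn
    (NNReal.continuous_rpow_const hy).continuousOn]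
  exact cfc_congr fun z _ => NNReal.rpow_add_of_nonneg z hx hy

lemma continuousAt_const_rpow (a : A) {t : ℝ} (ht : 0 < t) :
    ContinuousAt (fun s : ℝ => a ^ s) t := by
  set U := Icc (t / 2) (2 * t)
  have hU : U ∈ 𝓝 t := Icc_mem_nhds (by linarith) (by linarith)
  have hcont : ContinuousOn (fun q : ℝ × ℝ≥0 => q.2 ^ q.1) (U ×ˢ spectrum ℝ≥0 a) :=
    fun q hq => ContinuousAt.continuousWithinAt <|
      continuousAt_snd.nnrpow continuousAt_fst (Or.inr (by linarith [hq.1.1]))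
  have hK : IsCompact (U ×ˢ spectrum ℝ≥0 a) :=
    isCompact_Icc.prod (ContinuousFunctionalCalculus.isCompact_spectrum a)
  have hunif := (hK.uniformContinuousOn_of_continuous hcont).tendstoUniformlyOn
    (F := fun s (z : ℝ≥0) => z ^ s) (x := t) ⟨by linarith, by linarith⟩
  rw [nhdsWithin_eq_nhds.mpr hU] at hunif
  refine continuousAt_cfc_fun hunif ?_
  filter_upwards [lt_mem_nhds ht] with s hs
  exact (NNReal.continuous_rpow_const hs.le).continuousOn

end CFC

namespace PositiveLinearMap

lemma norm_apply_star_mul_sq_le (f : A →ₚ[ℂ] ℂ) (a b : A) :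
    ‖f (star a * b)‖ ^ 2 ≤ (f (star a * a)).re * (f (star b * b)).re := by
  have h := norm_inner_le_norm (𝕜 := ℂ) (f.toPreGNS a) (f.toPreGNS b)
  rw [preGNS_inner_def, preGNS_norm_def, preGNS_norm_def] at h
  simp only [ofPreGNS_toPreGNS] at h
  have ha := (f.map_nonneg (star_mul_self_nonneg a)).1
  have hb := (f.map_nonneg (star_mul_self_nonneg b)).1
  calc _ ≤ (√(f (star a * a)).re * √(f (star b * b)).re) ^ 2 := by gcongr
    _ = _ := by rw [mul_pow, Real.sq_sqrt ha, Real.sq_sqrt hb]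

def IsTracial (f : A →ₚ[ℂ] ℂ) : Prop := ∀ a b : A, f (a * b) = f (b * a)

variable {f : A →ₚ[ℂ] ℂ}

namespace IsTracial

lemma apply_star_mul_rpow_mul_rpow (hf : f.IsTracial) (a b : A) {u₁ u₂ v₁ v₂ : ℝ}
    (hu₁ : 0 ≤ u₁) (hu₂ : 0 ≤ u₂) (hv₁ : 0 ≤ v₁) (hv₂ : 0 ≤ v₂) :
    f (star (a ^ (u₁ / 2) * b ^ (v₁ / 2)) * (a ^ (u₂ / 2) * b ^ (v₂ / 2))) =
      f (a ^ ((u₁ + u₂) / 2) * b ^ ((v₁ + v₂) / 2)) := by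
  have ha : (u₁ + u₂) / 2 = u₁ / 2 + u₂ / 2 := by ring
  have hb : (v₁ + v₂) / 2 = v₂ / 2 + v₁ / 2 := by ring
  rw [star_mul, (IsSelfAdjoint.of_nonneg CFC.rpow_nonneg).star_eq,
    (IsSelfAdjoint.of_nonneg CFC.rpow_nonneg).star_eq, ha, hb,
    CFC.rpow_add_of_nonneg a (by positivity) (by positivity),
    CFC.rpow_add_of_nonneg b (by positivity) (by positivity)]
  simp only [mul_assoc]
  rw [hf]
  simp only [mul_assoc]

lemma apply_rpow_mul_rpow_eq (hf : f.IsTracial) (a b : A) {u v : ℝ} (hu : 0 ≤ u) (hv : 0 ≤ v) :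
    f (a ^ u * b ^ v) = f (star (a ^ (u / 2) * b ^ (v / 2)) * (a ^ (u / 2) * b ^ (v / 2))) := by
  rw [hf.apply_star_mul_rpow_mul_rpow a b hu hu hv hv, add_self_div_two, add_self_div_two]

lemma apply_rpow_mul_rpow_nonneg (hf : f.IsTracial) (a b : A) {u v : ℝ} (hu : 0 ≤ u)
    (hv : 0 ≤ v) : 0 ≤ f (a ^ u * b ^ v) := by
  rw [hf.apply_rpow_mul_rpow_eq a b hu hv]
  exact f.map_nonneg (star_mul_self_nonneg _)

lemma sq_re_apply_rpow_mul_rpow_midpoint_le (hf : f.IsTracial) (a b : A) {u₁ u₂ v₁ v₂ : ℝ}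
    (hu₁ : 0 ≤ u₁) (hu₂ : 0 ≤ u₂) (hv₁ : 0 ≤ v₁) (hv₂ : 0 ≤ v₂) :
    (f (a ^ ((u₁ + u₂) / 2) * b ^ ((v₁ + v₂) / 2))).re ^ 2 ≤
      (f (a ^ u₁ * b ^ v₁)).re * (f (a ^ u₂ * b ^ v₂)).re := by
  have h := f.norm_apply_star_mul_sq_le (a ^ (u₁ / 2) * b ^ (v₁ / 2)) (a ^ (u₂ / 2) * b ^ (v₂ / 2))
  rw [hf.apply_star_mul_rpow_mul_rpow a b hu₁ hu₂ hv₁ hv₂, ← hf.apply_rpow_mul_rpow_eq a b hu₁ hv₁,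
    ← hf.apply_rpow_mul_rpow_eq a b hu₂ hv₂] at h
  refine le_trans ?_ h
  rw [sq_le_sq, abs_norm]
  exact Complex.abs_re_le_norm _

lemma re_apply_mul_le_Lp_mul_Lq (hf : f.IsTracial) {a b : A} (ha : 0 ≤ a) (hb : 0 ≤ b)
    {r s : ℝ} (hrs : r.HolderConjugate s) :
    (f (a * b)).re ≤ (f (a ^ r)).re ^ r⁻¹ * (f (b ^ s)).re ^ s⁻¹ := by
  set F : ℝ → ℝ := fun θ => (f (a ^ (r * θ) * b ^ (s * (1 - θ)))).re with hF
  have hF_nonneg : ∀ θ ∈ Icc (0 : ℝ) 1, 0 ≤ F θ := fun θ hθ =>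
    (hf.apply_rpow_mul_rpow_nonneg a b (mul_nonneg hrs.nonneg hθ.1)
      (mul_nonneg hrs.symm.nonneg (sub_nonneg.2 hθ.2))).1
  have hF_mid : ∀ x ∈ Icc (0 : ℝ) 1, ∀ y ∈ Icc (0 : ℝ) 1, F ((x + y) / 2) ^ 2 ≤ F x * F y := by
    intro x hx y hy
    convert hf.sq_re_apply_rpow_mul_rpow_midpoint_le a b (mul_nonneg hrs.nonneg hx.1)
      (mul_nonneg hrs.nonneg hy.1) (mul_nonneg hrs.symm.nonneg (sub_nonneg.2 hx.2))
      (mul_nonneg hrs.symm.nonneg (sub_nonneg.2 hy.2)) using 7 <;> ring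
  have hr : r * r⁻¹ = 1 := mul_inv_cancel₀ hrs.ne_zero
  have hs : s * (1 - r⁻¹) = 1 := by rw [hrs.one_sub_inv, mul_inv_cancel₀ hrs.symm.ne_zero]
  -- `F` need not be continuous at `0` and `1`: as `t → 0⁺`, `a ^ t` tends to the support
  -- projection of `a`, not to `a ^ 0 = 1`.
  have hcont : ContinuousAt F r⁻¹ := by
    have ha_cont : ContinuousAt (fun θ : ℝ => a ^ (r * θ)) r⁻¹ :=
      (CFC.continuousAt_const_rpow a (by rw [hr]; exact one_pos)).comp
        (continuousAt_const.mul continuousAt_id)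
    have hb_cont : ContinuousAt (fun θ : ℝ => b ^ (s * (1 - θ))) r⁻¹ :=
      (CFC.continuousAt_const_rpow b (by rw [hs]; exact one_pos)).comp
        (continuousAt_const.mul (continuousAt_const.sub continuousAt_id))
    exact Complex.continuous_re.continuousAt.comp
      ((map_continuous f).continuousAt.comp (ha_cont.mul hb_cont))
  have key := le_rpow_mul_rpow_of_sq_midpoint_le hF_nonneg hF_mid
    ⟨hrs.inv_pos, inv_lt_one_of_one_lt₀ hrs.lt⟩ hcont
  have hF_mid_pt : F r⁻¹ = (f (a * b)).re := by
    simp only [hF, hr, hs, CFC.rpow_one a ha, CFC.rpow_one b hb]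
  have hF_zero : F 0 = (f (b ^ s)).re := by simp [hF, CFC.rpow_zero a ha]
  have hF_one : F 1 = (f (a ^ r)).re := by simp [hF, CFC.rpow_zero b hb]
  rwa [hF_mid_pt, hF_zero, hF_one, hrs.one_sub_inv, mul_comm] at key

lemma norm_apply_mul_mul_star_le (hf : f.IsTracial) {W : A} (hW : 0 ≤ W) {r s : ℝ}
    (hrs : r.HolderConjugate s) (x y : A) :
    ‖f (x * W * star y)‖ ≤ (f ((star x * x) ^ r)).re ^ (2 * r)⁻¹ *
      (f ((star y * y) ^ r)).re ^ (2 * r)⁻¹ * (f (W ^ s)).re ^ s⁻¹ := by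
  set P : A → ℝ := fun z => (f ((star z * z) ^ r)).re
  set Q := (f (W ^ s)).re
  have hP : ∀ z, 0 ≤ P z := fun z => (f.map_nonneg CFC.rpow_nonneg).1
  have hQ : 0 ≤ Q := (f.map_nonneg CFC.rpow_nonneg).1
  have hsqrt : ∀ z z' : A,
      star (CFC.sqrt W * star z) * (CFC.sqrt W * star z') = z * W * star z' := by
    intro z z'
    rw [star_mul, star_star, (IsSelfAdjoint.of_nonneg (CFC.sqrt_nonneg W)).star_eq, mul_assoc,
      ← mul_assoc (CFC.sqrt W), CFC.sqrt_mul_sqrt_self W hW, ← mul_assoc]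
  have hholder : ∀ z, (f (z * W * star z)).re ≤ P z ^ r⁻¹ * Q ^ s⁻¹ := by
    intro z
    rw [hf (z * W), ← mul_assoc]
    exact hf.re_apply_mul_le_Lp_mul_Lq (star_mul_self_nonneg z) hW hrs
  have hcs := f.norm_apply_star_mul_sq_le (CFC.sqrt W * star x) (CFC.sqrt W * star y)
  rw [hsqrt, hsqrt, hsqrt] at hcs
  have hhalf : ∀ z, (P z ^ (2 * r)⁻¹) ^ 2 = P z ^ r⁻¹ := fun z => by
    rw [← Real.rpow_mul_natCast (hP z), Nat.cast_ofNat, mul_inv, mul_comm,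
      mul_inv_cancel_left₀ two_ne_zero]
  have hR : 0 ≤ P x ^ (2 * r)⁻¹ * P y ^ (2 * r)⁻¹ * Q ^ s⁻¹ :=
    mul_nonneg (mul_nonneg (Real.rpow_nonneg (hP x) _) (Real.rpow_nonneg (hP y) _))
      (Real.rpow_nonneg hQ _)
  refine (pow_le_pow_iff_left₀ (norm_nonneg _) hR two_ne_zero).mp ?_
  calc ‖f (x * W * star y)‖ ^ 2 ≤ (P x ^ r⁻¹ * Q ^ s⁻¹) * (P y ^ r⁻¹ * Q ^ s⁻¹) :=
        hcs.trans (mul_le_mul (hholder x) (hholder y)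
          (by rw [← hsqrt]; exact (f.map_nonneg (star_mul_self_nonneg _)).1)
          (mul_nonneg (Real.rpow_nonneg (hP x) _) (Real.rpow_nonneg hQ _)))
    _ = (P x ^ (2 * r)⁻¹ * P y ^ (2 * r)⁻¹ * Q ^ s⁻¹) ^ 2 := by
        rw [mul_pow, mul_pow, hhalf, hhalf]
        ring

end IsTracial

end PositiveLinearMap

end CStarAlgebra

/-- Hölder-type inequality: for a unital C*-algebra `A`, a positive
tracial linear functional `φ`, a real number `p > 2` and `0 ≤ W ∈ A`, for all `x, y ∈ A`,
`|φ(x W y*)| ≤ φ(|x|^p)^{1/p} · φ(|y|^p)^{1/p} · φ(W^{p/(p-2)})^{(p-2)/p}`,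
the quantities `φ(|x|^p)`, `φ(|y|^p)`, `φ(W^{p/(p-2)})` being nonnegative reals.
In particular, if `φ(W^{p/(p-2)}) ≤ 1` then
`|φ(x W y*)| ≤ φ(|x|^p)^{1/p} · φ(|y|^p)^{1/p}`.
Here `|x|^p = (x* x)^{p/2}` is defined via the continuous functional calculus. -/
theorem statement2 {A : Type*} [CStarAlgebra A] [PartialOrder A] [StarOrderedRing A]
    (φ : A →ₗ[ℂ] ℂ)
    (hφpos : ∀ a : A, 0 ≤ φ (star a * a))
    (hφtr : ∀ a b : A, φ (a * b) = φ (b * a))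
    (p : ℝ) (hp : 2 < p)
    (W : A) (hW : 0 ≤ W) :
    (∀ x : A, 0 ≤ φ (CFC.rpow (star x * x) (p / 2))) ∧
    (0 ≤ φ (CFC.rpow W (p / (p - 2)))) ∧
    (∀ x y : A,
      ‖φ (x * W * star y)‖ ≤
        (φ (CFC.rpow (star x * x) (p / 2))).re ^ (1 / p) *
        (φ (CFC.rpow (star y * y) (p / 2))).re ^ (1 / p) *
        (φ (CFC.rpow W (p / (p - 2)))).re ^ ((p - 2) / p)) ∧
    ((φ (CFC.rpow W (p / (p - 2)))).re ≤ 1 →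
      ∀ x y : A,
        ‖φ (x * W * star y)‖ ≤
          (φ (CFC.rpow (star x * x) (p / 2))).re ^ (1 / p) *
          (φ (CFC.rpow (star y * y) (p / 2))).re ^ (1 / p)) := by
  let f : A →ₚ[ℂ] ℂ := .mk₀ φ fun _ => map_nonneg_of_forall_star_mul_self_nonneg φ hφpos
  have hf : f.IsTracial := hφtr
  have hrs : (p / 2).HolderConjugate (p / (p - 2)) := by
    simpa only [inv_div] using Real.HolderConjugate.inv_inv (a := 2 / p) (b := (p - 2) / p)
      (by positivity) (div_pos (by linarith) (by linarith)) (by field_simp; ring)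
  have hholder : ∀ x y : A, ‖φ (x * W * star y)‖ ≤
      (φ (CFC.rpow (star x * x) (p / 2))).re ^ (1 / p) *
      (φ (CFC.rpow (star y * y) (p / 2))).re ^ (1 / p) *
      (φ (CFC.rpow W (p / (p - 2)))).re ^ ((p - 2) / p) := fun x y => by
    have h := hf.norm_apply_mul_mul_star_le hW hrs x y
    rwa [show (2 * (p / 2))⁻¹ = 1 / p by ring, inv_div] at h
  refine ⟨fun x => f.map_nonneg CFC.rpow_nonneg, f.map_nonneg CFC.rpow_nonneg, hholder,
    fun hW_one x y => (hholder x y).trans ?_⟩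
  refine mul_le_of_le_one_right ?_ (Real.rpow_le_one (f.map_nonneg CFC.rpow_nonneg).1 hW_one ?_)
  · exact mul_nonneg (Real.rpow_nonneg (f.map_nonneg CFC.rpow_nonneg).1 _)
      (Real.rpow_nonneg (f.map_nonneg CFC.rpow_nonneg).1 _)
  · exact div_nonneg (by linarith) (by linarith)
end

section
/- Let A be a unital C*-algebra, φ a positive tracial linear functional on A, and p ≥ 1 a real number. Then for every x ∈ A, φ(|x*|^p) = φ(|x|^p), i.e. φ((x x*)^{p/2}) = φ((x* x)^{p/2}). -/
open ComplexOrder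

/-!
Since `φ` is tracial, `φ ((x x⋆)ⁿ) = φ ((x⋆ x)ⁿ)`, hence `φ (q (x x⋆)) = φ (q (x⋆ x))` for every
real polynomial `q`. A positive functional on a C⋆-algebra is continuous, and on a compact interval
containing both spectra `t ↦ t ^ (p / 2)` is a uniform limit of polynomials, so the identity passes
to the continuous functional calculus.
-/

open Filter Polynomial Set Topology

theorem exists_seq_polynomial_tendstoUniformlyOn_Icc {a b : ℝ} {f : ℝ → ℝ}
    (hf : ContinuousOn f (Icc a b)) :
    ∃ q : ℕ → ℝ[X], TendstoUniformlyOn (fun n x ↦ (q n).eval x) f atTop (Icc a b) := by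
  choose q hq using fun n : ℕ ↦
    exists_polynomial_near_of_continuousOn a b f hf (1 / (n + 1)) Nat.one_div_pos_of_nat
  refine ⟨q, Metric.tendstoUniformlyOn_iff.mpr fun ε hε ↦ ?_⟩
  filter_upwards [tendsto_one_div_add_atTop_nhds_zero_nat.eventually (gt_mem_nhds hε)]
    with n hn x hx
  rw [Real.dist_eq, abs_sub_comm]
  exact (hq n x hx).trans hn

theorem map_pow_mul_comm {A M : Type*} [Monoid A] {φ : A → M}
    (hφ : ∀ a b, φ (a * b) = φ (b * a)) (x y : A) (n : ℕ) :
    φ ((x * y) ^ n) = φ ((y * x) ^ n) := by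
  cases n with
  | zero => simp only [pow_zero]
  | succ n => rw [pow_succ, ← mul_assoc, mul_pow_mul, mul_assoc, hφ, mul_assoc, ← pow_succ]

theorem map_aeval_mul_comm {R A M : Type*} [CommSemiring R] [Semiring A] [Algebra R A]
    [AddCommMonoid M] [Module R M] (φ : A →ₗ[R] M) (hφ : ∀ a b, φ (a * b) = φ (b * a))
    (x y : A) (q : R[X]) : φ (aeval (x * y) q) = φ (aeval (y * x) q) := by
  simp only [aeval_eq_sum_range, map_sum, map_smul, map_pow_mul_comm hφ]

theorem map_cfc_eq_of_map_aeval_eq {A E : Type*} {p : A → Prop} [Ring A] [StarRing A]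
    [TopologicalSpace A] [Algebra ℝ A] [ContinuousFunctionalCalculus ℝ A p]
    [TopologicalSpace E] [T2Space E] {φ : A → E} (hφ : Continuous φ) {a b : A}
    (ha : p a) (hb : p b) (h : ∀ q : ℝ[X], φ (aeval a q) = φ (aeval b q))
    {f : ℝ → ℝ} (hf : Continuous f) : φ (cfc f a) = φ (cfc f b) := by
  have hK : IsCompact (spectrum ℝ a ∪ spectrum ℝ b) :=
    (ContinuousFunctionalCalculus.isCompact_spectrum (p := p) a).union
      (ContinuousFunctionalCalculus.isCompact_spectrum (p := p) b)
  obtain ⟨m, M, hmM⟩ := bddBelow_bddAbove_iff_subset_Icc.mp ⟨hK.bddBelow, hK.bddAbove⟩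
  obtain ⟨q, hq⟩ :=
    exists_seq_polynomial_tendstoUniformlyOn_Icc (a := m) (b := M) hf.continuousOn
  have tendsto_map_aeval {c : A} (hc : p c) (hsub : spectrum ℝ c ⊆ Icc m M) :
      Tendsto (fun n ↦ φ (aeval c (q n))) atTop (𝓝 (φ (cfc f c))) := by
    have := tendsto_cfc_fun (a := c) (hq.mono hsub)
      (Eventually.of_forall fun n ↦ (q n).continuous.continuousOn)
    simp only [cfc_polynomial _ c hc] at this
    exact (hφ.tendsto _).comp this
  refine tendsto_nhds_unique (tendsto_map_aeval ha (subset_union_left.trans hmM)) ?_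
  simpa only [h] using tendsto_map_aeval hb (subset_union_right.trans hmM)

theorem LinearMap.continuous_of_map_star_mul_self_nonneg {A : Type*} [NonUnitalCStarAlgebra A]
    [PartialOrder A] [StarOrderedRing A] (φ : A →ₗ[ℂ] ℂ) (hφ : ∀ a, 0 ≤ φ (star a * a)) :
    Continuous φ := by
  have hφ_nonneg (c : A) (hc : 0 ≤ c) : 0 ≤ φ c := by
    obtain ⟨b, rfl⟩ := CStarAlgebra.nonneg_iff_eq_star_mul_self.mp hc
    exact hφ b
  exact map_continuous (PositiveLinearMap.mk₀ φ hφ_nonneg)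

/-- Let `A` be a unital C*-algebra, `φ` a positive tracial linear
functional on `A`, and `p ≥ 1` a real number.  Then for every `x ∈ A`,
`φ(|x*|^p) = φ(|x|^p)`, i.e. `φ((x x*)^{p/2}) = φ((x* x)^{p/2})`, the powers being
taken via the continuous functional calculus. -/
theorem statement5 {A : Type*} [CStarAlgebra A] [PartialOrder A] [StarOrderedRing A]
    (φ : A →ₗ[ℂ] ℂ)
    (hφpos : ∀ a : A, 0 ≤ φ (star a * a))
    (hφtr : ∀ a b : A, φ (a * b) = φ (b * a))
    (p : ℝ) (hp : 1 ≤ p) :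
    ∀ x : A, φ (CFC.rpow (x * star x) (p / 2)) = φ (CFC.rpow (star x * x) (p / 2)) := by
  intro x
  have hrpow (c : A) (hc : 0 ≤ c) : CFC.rpow c (p / 2) = cfc (fun t : ℝ ↦ t ^ (p / 2)) c :=
    CFC.rpow_eq_cfc_real hc
  rw [hrpow _ (mul_star_self_nonneg x), hrpow _ (star_mul_self_nonneg x)]
  exact map_cfc_eq_of_map_aeval_eq (φ.continuous_of_map_star_mul_self_nonneg hφpos)
    (mul_star_self_nonneg x).isSelfAdjoint (star_mul_self_nonneg x).isSelfAdjoint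
    (map_aeval_mul_comm (φ.restrictScalars ℝ) hφtr x (star x))
    (Real.continuous_rpow_const (by linarith))
end

section
/- Let (X, A₀) be a CQ*-algebra with unit e, and let M_T(A₀) := { ω : A₀ → ℂ : there exists Ω ∈ T(X) with ω(a) = Ω(a, e) for all a ∈ A₀ }, a set of continuous linear functionals on the C*-algebra A₀[‖·‖₀]. Then M_T(A₀) is closed in the weak-* topology on the continuous dual of A₀, and M_T(A₀) is weak-* compact. -/
open ComplexOrder

/-- A CQ*-algebra `(X, A₀)` with unit: a complex Banach space `X` with an isometric
conjugate-linear involution, containing a dense copy of a unital C*-algebra `A₀` whose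
left and right multiplications extend to module actions of `A₀` on `X` satisfying the
quasi *-algebra compatibility conditions, the norm inequalities
`‖a‖ ≤ ‖a‖₀`, `‖ax‖ ≤ ‖a‖₀‖x‖`, `‖xa‖ ≤ ‖x‖‖a‖₀`, and such that the unit `e = 1` of
`A₀` satisfies `ex = xe = x` for all `x ∈ X`.
Here `lmul a x = a·x` and `rmul a x = x·a`. -/
structure CQStarAlgebra (X A : Type*)
    [NormedAddCommGroup X] [NormedSpace ℂ X] [CompleteSpace X]
    [StarAddMonoid X] [StarModule ℂ X]
    [NormedRing A] [StarRing A] [CStarRing A] [CompleteSpace A]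
    [NormedAlgebra ℂ A] : Type _ where
  incl : A →ₗ[ℂ] X
  incl_injective : Function.Injective incl
  incl_dense : DenseRange incl
  incl_star : ∀ a : A, incl (star a) = star (incl a)
  lmul : A →ₗ[ℂ] X →ₗ[ℂ] X
  rmul : A →ₗ[ℂ] X →ₗ[ℂ] X
  lmul_incl : ∀ a b : A, lmul a (incl b) = incl (a * b)
  rmul_incl : ∀ a b : A, rmul a (incl b) = incl (b * a)
  lmul_lmul : ∀ (a b : A) (x : X), lmul a (lmul b x) = lmul (a * b) x
  rmul_rmul : ∀ (a b : A) (x : X), rmul b (rmul a x) = rmul (a * b) x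
  lmul_rmul : ∀ (a b : A) (x : X), rmul b (lmul a x) = lmul a (rmul b x)
  star_lmul : ∀ (a : A) (x : X), star (lmul a x) = rmul (star a) (star x)
  one_lmul : ∀ x : X, lmul 1 x = x
  one_rmul : ∀ x : X, rmul 1 x = x
  norm_star : ∀ x : X, ‖star x‖ = ‖x‖
  norm_incl_le : ∀ a : A, ‖incl a‖ ≤ ‖a‖
  norm_lmul_le : ∀ (a : A) (x : X), ‖lmul a x‖ ≤ ‖a‖ * ‖x‖
  norm_rmul_le : ∀ (a : A) (x : X), ‖rmul a x‖ ≤ ‖x‖ * ‖a‖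

variable {X A : Type*}
    [NormedAddCommGroup X] [NormedSpace ℂ X] [CompleteSpace X]
    [StarAddMonoid X] [StarModule ℂ X]
    [NormedRing A] [StarRing A] [CStarRing A] [CompleteSpace A]
    [NormedAlgebra ℂ A]

/-- `Ω ∈ S(X)`: a positive sesquilinear form on `X × X` which is invariant
(`Ω(xa, b) = Ω(a, x*b)` for `x ∈ X`, `a, b ∈ A₀`) and bounded
(`|Ω(x,y)| ≤ ‖x‖‖y‖`). -/
def MemS (Q : CQStarAlgebra X A) (Ω : X →ₗ[ℂ] X →ₛₗ[starRingEnd ℂ] ℂ) : Prop :=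
  (∀ x : X, 0 ≤ Ω x x) ∧
  (∀ (x : X) (a b : A),
      Ω (Q.rmul a x) (Q.incl b) = Ω (Q.incl a) (Q.rmul b (star x))) ∧
  (∀ x y : X, ‖Ω x y‖ ≤ ‖x‖ * ‖y‖)

/-- `Ω ∈ T(X)`: `Ω ∈ S(X)` and `Ω(x,x) = Ω(x*,x*)` for every `x ∈ X`. -/
def MemT (Q : CQStarAlgebra X A) (Ω : X →ₗ[ℂ] X →ₛₗ[starRingEnd ℂ] ℂ) : Prop :=
  MemS Q Ω ∧ ∀ x : X, Ω x x = Ω (star x) (star x)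

/-- Let `(X, A₀)` be a CQ*-algebra with unit `e` and let
`M_T(A₀) = { ω : ω(a) = Ω(a, e) for some Ω ∈ T(X) }`, viewed as a set of continuous
linear functionals on the C*-algebra `A₀` with the weak-* topology.  Then `M_T(A₀)` is
weak-* closed and weak-* compact. -/
theorem statement12 (Q : CQStarAlgebra X A) :
    IsClosed {ω : WeakDual ℂ A | ∃ Ω : X →ₗ[ℂ] X →ₛₗ[starRingEnd ℂ] ℂ,
        MemT Q Ω ∧ ∀ a : A, ω a = Ω (Q.incl a) (Q.incl 1)} ∧
    IsCompact {ω : WeakDual ℂ A | ∃ Ω : X →ₗ[ℂ] X →ₛₗ[starRingEnd ℂ] ℂ,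
        MemT Q Ω ∧ ∀ a : A, ω a = Ω (Q.incl a) (Q.incl 1)} := by
  set S := {ω : WeakDual ℂ A | ∃ Ω : X →ₗ[ℂ] X →ₛₗ[starRingEnd ℂ] ℂ,
        MemT Q Ω ∧ ∀ a : A, ω a = Ω (Q.incl a) (Q.incl 1)} with hS
  -- the set of "pointwise" forms in the product space
  set G : Set (X → X → ℂ) :=
    {f | (∀ x y z, f (x + y) z = f x z + f y z) ∧
         (∀ (c : ℂ) (x z : X), f (c • x) z = c * f x z) ∧
         (∀ x y z, f x (y + z) = f x y + f x z) ∧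
         (∀ (c : ℂ) (x y : X), f x (c • y) = starRingEnd ℂ c * f x y) ∧
         (∀ x, 0 ≤ f x x) ∧
         (∀ (x : X) (a b : A),
            f (Q.rmul a x) (Q.incl b) = f (Q.incl a) (Q.rmul b (star x))) ∧
         (∀ x y, ‖f x y‖ ≤ ‖x‖ * ‖y‖) ∧
         (∀ x, f x x = f (star x) (star x))} with hG
  have hcont : ∀ x z : X, Continuous fun f : X → X → ℂ => f x z :=
    fun x z => (continuous_apply z).comp (continuous_apply x)
  have hposC : IsClosed {z : ℂ | 0 ≤ z} := by
    have : {z : ℂ | 0 ≤ z} = Complex.re ⁻¹' Set.Ici 0 ∩ Complex.im ⁻¹' {0} := by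
      ext z; simp [Complex.le_def, eq_comm]
    rw [this]
    exact (isClosed_Ici.preimage Complex.continuous_re).inter
      (isClosed_singleton.preimage Complex.continuous_im)
  have hGclosed : IsClosed G := by
    rw [hG]
    simp only [Set.setOf_and, Set.setOf_forall]
    refine IsClosed.inter (isClosed_iInter fun x => isClosed_iInter fun y =>
        isClosed_iInter fun z => isClosed_eq (hcont _ _) ((hcont _ _).add (hcont _ _))) ?_
    refine IsClosed.inter (isClosed_iInter fun c => isClosed_iInter fun x =>
        isClosed_iInter fun z => isClosed_eq (hcont _ _) (continuous_const.mul (hcont _ _))) ?_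
    refine IsClosed.inter (isClosed_iInter fun x => isClosed_iInter fun y =>
        isClosed_iInter fun z => isClosed_eq (hcont _ _) ((hcont _ _).add (hcont _ _))) ?_
    refine IsClosed.inter (isClosed_iInter fun c => isClosed_iInter fun x =>
        isClosed_iInter fun y => isClosed_eq (hcont _ _) (continuous_const.mul (hcont _ _))) ?_
    refine IsClosed.inter (isClosed_iInter fun x => hposC.preimage (hcont x x)) ?_
    refine IsClosed.inter (isClosed_iInter fun x => isClosed_iInter fun a =>
        isClosed_iInter fun b => isClosed_eq (hcont _ _) (hcont _ _)) ?_
    refine IsClosed.inter (isClosed_iInter fun x => isClosed_iInter fun y =>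
        isClosed_le (hcont _ _).norm continuous_const) ?_
    exact isClosed_iInter fun x => isClosed_eq (hcont _ _) (hcont _ _)
  have hGcompact : IsCompact G := by
    have hK : IsCompact (Set.univ.pi fun x : X =>
        Set.univ.pi fun y : X => Metric.closedBall (0 : ℂ) (‖x‖ * ‖y‖)) :=
      isCompact_univ_pi fun x => isCompact_univ_pi fun y => isCompact_closedBall 0 _
    refine hK.of_isClosed_subset hGclosed ?_
    intro f hf
    rw [hG] at hf
    intro x _ y _
    simpa [Metric.mem_closedBall, dist_eq_norm] using hf.2.2.2.2.2.2.1 x y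
  have hψ : Continuous fun (f : X → X → ℂ) (a : A) => f (Q.incl a) (Q.incl 1) :=
    continuous_pi fun a => hcont _ _
  have hemb : Topology.IsEmbedding fun (ω : WeakDual ℂ A) (a : A) => ω a :=
    WeakBilin.isEmbedding ContinuousLinearMap.coe_injective
  have himg : (fun (ω : WeakDual ℂ A) (a : A) => ω a) '' S
      = (fun (f : X → X → ℂ) (a : A) => f (Q.incl a) (Q.incl 1)) '' G := by
    ext g
    constructor
    · rintro ⟨ω, ⟨Ω, ⟨⟨h5, h6, h7⟩, h8⟩, hω⟩, rfl⟩
      refine ⟨fun x y => Ω x y, ?_, ?_⟩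
      · exact ⟨fun x y z => by simp, fun c x z => by simp,
          fun x y z => by simp, fun c x y => by simp,
          h5, h6, h7, h8⟩
      · funext a; exact (hω a).symm
    · rintro ⟨f, hf, rfl⟩
      obtain ⟨h1, h2, h3, h4, h5, h6, h7, h8⟩ := hf
      let Ω : X →ₗ[ℂ] X →ₛₗ[starRingEnd ℂ] ℂ :=
        { toFun := fun x =>
            { toFun := f x
              map_add' := h3 x
              map_smul' := fun c y => by simpa [smul_eq_mul] using h4 c x y }
          map_add' := fun x y => LinearMap.ext fun z => h1 x y z
          map_smul' := fun c x => LinearMap.ext fun z => by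
            simpa [smul_eq_mul] using h2 c x z }
      let L : A →ₗ[ℂ] ℂ :=
        { toFun := fun a => f (Q.incl a) (Q.incl 1)
          map_add' := fun a b => by
            show f (Q.incl (a + b)) _ = _
            rw [map_add]; exact h1 _ _ _
          map_smul' := fun c a => by
            show f (Q.incl (c • a)) _ = _
            rw [map_smul]; simpa [smul_eq_mul] using h2 c _ _ }
      refine ⟨LinearMap.mkContinuous L ‖Q.incl (1 : A)‖ (fun a => ?_),
        ⟨Ω, ⟨⟨h5, h6, h7⟩, h8⟩, fun a => rfl⟩, rfl⟩
      calc ‖f (Q.incl a) (Q.incl 1)‖ ≤ ‖Q.incl a‖ * ‖Q.incl 1‖ := h7 _ _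
        _ ≤ ‖a‖ * ‖Q.incl 1‖ :=
            mul_le_mul_of_nonneg_right (Q.norm_incl_le a) (norm_nonneg _)
        _ = ‖Q.incl (1 : A)‖ * ‖a‖ := mul_comm _ _
  have hcompact : IsCompact S := by
    rw [hemb.isCompact_iff, himg]
    exact hGcompact.image hψ
  exact ⟨hcompact.isClosed, hcompact⟩
end
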